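/- N-fold composition theorem for MPC: let (U,G) be the one-step bifunction of an MPC subproblem with affine dynamics f_d, convex cost ℓ, and convex constraint g. Then for every N ≥ 1, the N-fold composite (U,G)^N satisfies (U,G)^N((u_{N-1},...,u_0,x_0), x_N) = inf over x_1,...,x_{N-1} of Σ_{i=0}^{N-1} [ℓ(x_i,u_i) + δ(x_{i+1} = f_d(x_i,u_i)) + δ(g(x_i,u_i) ≤ 0)], i.e. it is the bifunction representation of the N-horizon MPC optimization problem. -/

import Mathlib

open Classical

/-- The `N`-fold sequential (parameterized) composite of a one-step bifunction
`G : (U × X) × X → EReal`: `horizon G N u x₀ x_N` composes `G` with itself `N`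
times, using control `u i` at step `i`, starting from `x₀` and ending at `x_N`. -/
noncomputable def horizon {X U : Type*} (G : (U × X) × X → EReal) :
    ℕ → (ℕ → U) → X → X → EReal
  | 0, _, x0, xN => if xN = x0 then (0 : EReal) else ⊤
  | (N + 1), u, x0, xN => ⨅ y : X, horizon G N u x0 y + G ((u N, y), xN)

/-! Because the dynamics are deterministic, the only finite-cost path from `x₀` under the
controls `u` is the forced trajectory `x_{i+1} = f (x_i, u_i)`. Both the `N`-fold composite and
the infimum over paths therefore equal the cost along that trajectory when `x_N` is its endpoint,
and `⊤` otherwise. Since every stage cost is `≠ ⊥`, a single `⊤` term makes a sum `⊤`, so the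
convention for `⊥ + ⊤` never enters. -/

namespace EReal

theorem sum_ne_bot {ι : Type*} {s : Finset ι} {f : ι → EReal} (h : ∀ i ∈ s, f i ≠ ⊥) :
    ∑ i ∈ s, f i ≠ ⊥ := fun hsum => by
  obtain ⟨i, hi, hbot⟩ := WithBot.sum_eq_bot_iff.1 hsum
  exact h i hi hbot

theorem sum_eq_top_of_mem {ι : Type*} {s : Finset ι} {f : ι → EReal} (h : ∀ i ∈ s, f i ≠ ⊥)
    {j : ι} (hj : j ∈ s) (hfj : f j = ⊤) : ∑ i ∈ s, f i = ⊤ := by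
  rw [← Finset.add_sum_erase s f hj, hfj]
  exact top_add_of_ne_bot (sum_ne_bot fun i hi => h i (Finset.mem_of_mem_erase hi))

end EReal

section Trajectory

variable {X U : Type*}

def trajectory (f : X × U → X) (u : ℕ → U) (x₀ : X) : ℕ → X
  | 0 => x₀
  | N + 1 => f (trajectory f u x₀ N, u N)

noncomputable def trajectoryCost (G : (U × X) × X → EReal) (f : X × U → X) (u : ℕ → U)
    (x₀ : X) (N : ℕ) : EReal :=
  ∑ i ∈ Finset.range N, G ((u i, trajectory f u x₀ i), trajectory f u x₀ (i + 1))

variable {G : (U × X) × X → EReal} {f : X × U → X}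

theorem horizon_eq_ite_trajectoryCost (hG_ne_bot : ∀ q, G q ≠ ⊥)
    (hG_top : ∀ u x x', x' ≠ f (x, u) → G ((u, x), x') = ⊤) (u : ℕ → U) (x₀ : X) (N : ℕ)
    (xN : X) :
    horizon G N u x₀ xN =
      if xN = trajectory f u x₀ N then trajectoryCost G f u x₀ N else ⊤ := by
  induction N generalizing xN with
  | zero =>
    simp only [horizon, trajectory, trajectoryCost, Finset.range_zero, Finset.sum_empty]
    rfl
  | succ N ih =>
    set T := trajectory f u x₀
    set C := trajectoryCost G f u x₀ N
    have hstep : ∀ y, horizon G N u x₀ y + G ((u N, y), xN) =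
        if y = T N then C + G ((u N, T N), xN) else ⊤ := by
      intro y
      rw [ih]
      split_ifs with hy
      · rw [hy]
      · exact EReal.top_add_of_ne_bot (hG_ne_bot _)
    calc horizon G (N + 1) u x₀ xN
        = ⨅ y, if y = T N then C + G ((u N, T N), xN) else ⊤ := by simp only [horizon, hstep]
      _ = C + G ((u N, T N), xN) := by simp only [← iInf_eq_if, iInf_iInf_eq_left]
      _ = if xN = T (N + 1) then trajectoryCost G f u x₀ (N + 1) else ⊤ := by
        by_cases hxN : xN = T (N + 1)
        · rw [if_pos hxN, trajectoryCost, Finset.sum_range_succ, hxN]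
          rfl
        · rw [if_neg hxN, hG_top _ _ _ hxN]
          exact EReal.add_top_of_ne_bot (EReal.sum_ne_bot fun _ _ => hG_ne_bot _)

theorem eq_trajectory_of_forall_succ {u : ℕ → U} {x₀ : X} {N : ℕ} {xs : Fin (N + 1) → X}
    (h₀ : xs 0 = x₀) (hstep : ∀ i : Fin N, xs i.succ = f (xs i.castSucc, u i)) :
    ∀ j : Fin (N + 1), xs j = trajectory f u x₀ j := by
  refine Fin.induction h₀ fun i hi => ?_
  rw [hstep, hi]
  rfl

theorem sum_fin_eq_trajectoryCost (u : ℕ → U) (x₀ : X) (N : ℕ) :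
    ∑ i : Fin N, G ((u i, trajectory f u x₀ i.castSucc), trajectory f u x₀ i.succ) =
      trajectoryCost G f u x₀ N :=
  Fin.sum_univ_eq_sum_range (fun i => G ((u i, trajectory f u x₀ i), trajectory f u x₀ (i + 1))) N

theorem iInf_sum_eq_ite_trajectoryCost (hG_ne_bot : ∀ q, G q ≠ ⊥)
    (hG_top : ∀ u x x', x' ≠ f (x, u) → G ((u, x), x') = ⊤) (u : ℕ → U) (x₀ : X) (N : ℕ)
    (xN : X) :
    ⨅ xs : {xs : Fin (N + 1) → X // xs 0 = x₀ ∧ xs (Fin.last N) = xN},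
        ∑ i : Fin N, G ((u i, xs.1 i.castSucc), xs.1 i.succ) =
      if xN = trajectory f u x₀ N then trajectoryCost G f u x₀ N else ⊤ := by
  apply le_antisymm
  · split_ifs with hxN
    · refine iInf_le_of_le ⟨fun j => trajectory f u x₀ j, rfl, hxN.symm⟩ ?_
      exact (sum_fin_eq_trajectoryCost u x₀ N).le
    · exact le_top
  · refine le_iInf ?_
    rintro ⟨xs, h₀, hlast⟩
    dsimp only
    by_cases hstep : ∀ i : Fin N, xs i.succ = f (xs i.castSucc, u i)
    · have hxs := eq_trajectory_of_forall_succ h₀ hstep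
      have hxN : xN = trajectory f u x₀ N := by rw [← hlast, hxs, Fin.val_last]
      simp only [hxs, if_pos hxN]
      exact (sum_fin_eq_trajectoryCost u x₀ N).ge
    · obtain ⟨i, hi⟩ := not_forall.1 hstep
      have hsum : ∑ j : Fin N, G ((u j, xs j.castSucc), xs j.succ) = ⊤ :=
        EReal.sum_eq_top_of_mem (fun _ _ => hG_ne_bot _) (Finset.mem_univ i) (hG_top _ _ _ hi)
      exact le_top.trans_eq hsum.symm

end Trajectory

theorem mpc_nfold_comp_general {n k m : ℕ}
    (fd : ((Fin n → ℝ) × (Fin k → ℝ)) →ᵃ[ℝ] (Fin n → ℝ))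
    (ℓ : (Fin n → ℝ) × (Fin k → ℝ) → ℝ)
    (g : (Fin n → ℝ) × (Fin k → ℝ) → (Fin m → ℝ))
    (N : ℕ) (u : ℕ → (Fin k → ℝ)) (x0 xN : Fin n → ℝ) :
    horizon (fun q : ((Fin k → ℝ) × (Fin n → ℝ)) × (Fin n → ℝ) =>
        ((ℓ (q.1.2, q.1.1) : EReal))
          + (if q.2 = fd (q.1.2, q.1.1) then (0 : EReal) else ⊤)
          + (if g (q.1.2, q.1.1) ≤ 0 then (0 : EReal) else ⊤)) N u x0 xN =
    ⨅ xs : {f : Fin (N + 1) → (Fin n → ℝ) // f 0 = x0 ∧ f (Fin.last N) = xN},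
      ∑ i : Fin N,
        (((ℓ (xs.1 i.castSucc, u i) : EReal))
          + (if xs.1 i.succ = fd (xs.1 i.castSucc, u i) then (0 : EReal) else ⊤)
          + (if g (xs.1 i.castSucc, u i) ≤ 0 then (0 : EReal) else ⊤)) := by
  have hG_ne_bot : ∀ q : ((Fin k → ℝ) × (Fin n → ℝ)) × (Fin n → ℝ),
      (ℓ (q.1.2, q.1.1) : EReal) + (if q.2 = fd (q.1.2, q.1.1) then 0 else ⊤)
        + (if g (q.1.2, q.1.1) ≤ 0 then 0 else ⊤) ≠ ⊥ := by
    intro q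
    simp only [EReal.add_ne_bot_iff]
    split_ifs <;> simp
  have hG_top : ∀ v x x', x' ≠ fd (x, v) →
      (ℓ (x, v) : EReal) + (if x' = fd (x, v) then 0 else ⊤)
        + (if g (x, v) ≤ 0 then 0 else ⊤) = ⊤ := by
    intro v x x' hx'
    rw [if_neg hx', EReal.add_top_of_ne_bot (EReal.coe_ne_bot _), EReal.top_add_of_ne_bot]
    split_ifs <;> simp
  rw [horizon_eq_ite_trajectoryCost hG_ne_bot hG_top,
    iInf_sum_eq_ite_trajectoryCost hG_ne_bot hG_top]

/-- N-fold composition theorem: the N-fold composite of the one-step MPC bifunction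
(for affine dynamics, convex cost and convex constraints) is the bifunction
representation of the N-horizon MPC optimization problem. -/
theorem mpc_nfold_comp {n k m : ℕ}
    (fd : ((Fin n → ℝ) × (Fin k → ℝ)) →ᵃ[ℝ] (Fin n → ℝ))
    (ℓ : (Fin n → ℝ) × (Fin k → ℝ) → ℝ)
    (g : (Fin n → ℝ) × (Fin k → ℝ) → (Fin m → ℝ))
    (hℓ : ConvexOn ℝ Set.univ ℓ)
    (hg : ∀ i, ConvexOn ℝ Set.univ (fun p => g p i))
    (N : ℕ) (hN : 1 ≤ N) (u : ℕ → (Fin k → ℝ)) (x0 xN : Fin n → ℝ) :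
    horizon (fun q : ((Fin k → ℝ) × (Fin n → ℝ)) × (Fin n → ℝ) =>
        ((ℓ (q.1.2, q.1.1) : EReal))
          + (if q.2 = fd (q.1.2, q.1.1) then (0 : EReal) else ⊤)
          + (if g (q.1.2, q.1.1) ≤ 0 then (0 : EReal) else ⊤)) N u x0 xN =
    ⨅ xs : {f : Fin (N + 1) → (Fin n → ℝ) // f 0 = x0 ∧ f (Fin.last N) = xN},
      ∑ i : Fin N,
        (((ℓ (xs.1 i.castSucc, u i) : EReal))
          + (if xs.1 i.succ = fd (xs.1 i.castSucc, u i) then (0 : EReal) else ⊤)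
          + (if g (xs.1 i.castSucc, u i) ≤ 0 then (0 : EReal) else ⊤)) :=
  mpc_nfold_comp_general fd ℓ g N u x0 xN
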